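/- Let (W,S) be a Coxeter system with finite index set B and with W a finite group, and let w₀ ∈ W be a longest element, i.e. ℓ(w) ≤ ℓ(w₀) for all w ∈ W. Then for every n : ℕ and every w ∈ W, the longest element is at most as likely as w for the lazy simple random walk: N n w₀ ≤ N n w. -/

import Mathlib

/-!
Conditioning on the first step gives `N (n + 1) w = N n w + ∑ i, N n (s i * w)`. From this,
`N n (w * s j) ≤ N n w` whenever `ℓ (w * s j) > ℓ w`, by induction on `n`: the terms
`N n (s i * w * s j)` and `N n (s i * w)` compare by induction unless `s i * w = w * s j`, and for
that single index (simple reflections are distinct) the two terms are `N n w` and `N n (w * s j)`,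
which trade places with the lazy terms. So `N n` is antitone along the right weak order, and the
longest element lies above every `w` because `ℓ w + ℓ (w⁻¹ * w₀) = ℓ w₀`.

The Coxeter-theoretic input comes from two representations: the geometric one separates the
simple reflections, and Bourbaki's action of `W` on `W × ℤ/2` yields a cocycle counting right
inversions mod 2, hence the strong exchange condition and the inversion-set description of length.
-/

/-- The number of lazy walks of length `n` (each step an element of `Option B`,
interpreted as `1` for `none` and the simple reflection `cs.simple i` for `some i`)
whose steps multiply, in order, to `w`. -/
noncomputable def lazyWalkCount {B W : Type*} [Group W] {M : CoxeterMatrix B}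
    (cs : CoxeterSystem M W) (n : ℕ) (w : W) : ℕ :=
  Nat.card {f : Fin n → Option B //
    (List.ofFn fun j => ((f j).elim 1 cs.simple)).prod = w}

theorem eq_mul_mul_inv_iff {G : Type*} [Group G] {a x y : G} :
    y = a * x * a⁻¹ ↔ a⁻¹ * y * a = x := by
  constructor <;> rintro rfl <;> group

theorem card_ofFn_prod_succ_eq_sum {α G : Type*} [Fintype α] [Group G] (φ : α → G) (n : ℕ) (g : G) :
    Nat.card {f : Fin (n + 1) → α // (List.ofFn fun k => φ (f k)).prod = g} =
      ∑ a, Nat.card {f : Fin n → α // (List.ofFn fun k => φ (f k)).prod = (φ a)⁻¹ * g} := by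
  rw [← Nat.card_sigma]
  refine Nat.card_congr ((Equiv.subtypeEquiv ((Fin.consEquiv fun _ => α).symm) fun f => ?_).trans
    (Equiv.subtypeProdEquivSigmaSubtype fun (a : α) (f : Fin n → α) =>
      (List.ofFn fun k => φ (f k)).prod = (φ a)⁻¹ * g))
  simp [List.ofFn_succ, eq_inv_mul_iff_mul_eq, Fin.tail]

namespace Module

open Real

variable {V : Type*} [AddCommGroup V] [Module ℝ V] {x y : V} {f g : Dual ℝ V} {θ : ℝ}

theorem preReflection_sin_smul_add_sin_smul (hf : f x = 2) (hfy : f y = -2 * cos θ) (a : ℝ) :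
    preReflection x f (sin a • x + sin (a + θ) • y) = sin (a + 2 * θ) • x + sin (a + θ) • y := by
  have hsin : sin (a + 2 * θ) = 2 * cos θ * sin (a + θ) - sin a := by
    rw [two_mul, ← add_assoc, sin_add (a + θ), sin_add a, cos_add a]
    linear_combination (-sin a) * sin_sq_add_cos_sq θ
  rw [preReflection_apply, map_add, map_smul, map_smul, hf, hfy, hsin]
  module

theorem preReflection_mul_preReflection_pow_sin_smul_add_sin_smul (hf : f x = 2) (hg : g y = 2)
    (hfy : f y = -2 * cos θ) (hgx : g x = -2 * cos θ) (n : ℕ) (φ : ℝ) :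
    ((preReflection x f * preReflection y g) ^ n) (sin (φ + θ) • x + sin φ • y) =
      sin (φ + n * (2 * θ) + θ) • x + sin (φ + n * (2 * θ)) • y := by
  induction n generalizing φ with
  | zero => simp
  | succ n ih =>
    have h₁ := preReflection_sin_smul_add_sin_smul hg hgx φ
    have h₂ := preReflection_sin_smul_add_sin_smul hf hfy (φ + θ)
    rw [show φ + θ + θ = φ + 2 * θ by ring, show φ + θ + 2 * θ = φ + 2 * θ + θ by ring] at h₂
    rw [pow_succ, Module.End.mul_apply, Module.End.mul_apply, add_comm, h₁, add_comm, h₂, ih]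
    push_cast
    ring_nf

theorem preReflection_mul_preReflection_pow_eq_one (hf : f x = 2) (hg : g y = 2)
    (hfy : f y = -2 * cos θ) (hgx : g x = -2 * cos θ) (hθ : sin θ ≠ 0) {m : ℕ}
    (hm : m * θ = π) : (preReflection x f * preReflection y g) ^ m = 1 := by
  set A := preReflection x f * preReflection y g
  have hrot (φ : ℝ) : (A ^ m) (sin (φ + θ) • x + sin φ • y) = sin (φ + θ) • x + sin φ • y := by
    rw [preReflection_mul_preReflection_pow_sin_smul_add_sin_smul hf hg hfy hgx,
      show φ + m * (2 * θ) = φ + 2 * π by linear_combination 2 * hm, add_right_comm,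
      sin_add_two_pi, sin_add_two_pi]
  have hx : (A ^ m) x = x := by
    have := hrot 0
    simp only [zero_add, sin_zero, zero_smul, add_zero, map_smul] at this
    exact smul_right_injective V hθ this
  have hy : (A ^ m) y = y := by
    have := hrot (π - θ)
    simp only [sub_add_cancel, sin_pi, zero_smul, zero_add, sin_pi_sub, map_smul] at this
    exact smul_right_injective V hθ this
  have hker (z : V) (hfz : f z = 0) (hgz : g z = 0) : (A ^ m) z = z := by
    have hAz : A z = z := by simp [A, preReflection_apply, hfz, hgz]
    rw [Module.End.pow_apply, Function.iterate_fixed hAz]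
  -- `ker f ⊓ ker g` complements `span {x, y}`: the Gram determinant is `4 sin² θ ≠ 0`.
  have hc : 1 - cos θ ^ 2 ≠ 0 := by rw [← sin_sq]; exact pow_ne_zero 2 hθ
  ext v
  set a := (f v + cos θ * g v) / (2 * (1 - cos θ ^ 2))
  set b := (g v + cos θ * f v) / (2 * (1 - cos θ ^ 2))
  have hz := hker (v - a • x - b • y)
    (by simp only [map_sub, map_smul, hf, hfy, smul_eq_mul, a, b]; field_simp; ring)
    (by simp only [map_sub, map_smul, hg, hgx, smul_eq_mul, a, b]; field_simp; ring)
  rw [map_sub, map_sub, map_smul, map_smul, hx, hy] at hz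
  simpa using hz

end Module

namespace CoxeterMatrix

open Real

variable {B : Type*} (M : CoxeterMatrix B)

/-- `M i j = 0` encodes `m = ∞`, where Lean's `π / 0 = 0` yields the correct entry `-2`. -/
noncomputable def geometricCoroot (i : B) : Module.Dual ℝ (B →₀ ℝ) :=
  Finsupp.linearCombination ℝ fun j => -2 * cos (π / M i j)

noncomputable def geometricReflection (i : B) : Module.End ℝ (B →₀ ℝ) :=
  Module.preReflection (Finsupp.single i 1) (M.geometricCoroot i)

theorem geometricCoroot_single (i j : B) :
    M.geometricCoroot i (Finsupp.single j 1) = -2 * cos (π / M i j) := by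
  simp [geometricCoroot]

theorem geometricCoroot_single_self (i : B) : M.geometricCoroot i (Finsupp.single i 1) = 2 := by
  simp [geometricCoroot_single]

theorem isLiftable_geometricReflection : M.IsLiftable M.geometricReflection := by
  intro i j
  by_cases hij : i = j
  · subst hij
    rw [M.diagonal, pow_one]
    refine LinearMap.ext fun v => ?_
    rw [Module.End.mul_apply, Module.End.one_apply]
    exact Module.involutive_preReflection (M.geometricCoroot_single_self i) v
  by_cases h0 : M i j = 0
  · rw [h0, pow_zero]
  have hm : (2 : ℝ) ≤ M i j := by
    have := M.off_diagonal i j hij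
    exact_mod_cast (by omega : 2 ≤ M i j)
  refine Module.preReflection_mul_preReflection_pow_eq_one (M.geometricCoroot_single_self i)
    (M.geometricCoroot_single_self j) (M.geometricCoroot_single i j)
    (by rw [geometricCoroot_single, M.symmetric]) ?_ ?_
  · apply (sin_pos_of_pos_of_lt_pi (by positivity) _).ne'
    rw [div_lt_iff₀ (by positivity)]
    nlinarith [pi_pos]
  · field_simp

end CoxeterMatrix

namespace CoxeterSystem

variable {B W : Type*} [Group W] {M : CoxeterMatrix B} (cs : CoxeterSystem M W)

theorem simple_eq_simple_mul_mul_simple_iff (i j : B) (x : W) :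
    cs.simple i = cs.simple j * x * cs.simple j ↔ cs.simple j * cs.simple i * cs.simple j = x := by
  simpa using eq_mul_mul_inv_iff (a := cs.simple j) (x := x) (y := cs.simple i)

theorem simple_injective : Function.Injective cs.simple := by
  intro i j hij
  by_contra hne
  have h := congrArg (cs.lift ⟨_, M.isLiftable_geometricReflection⟩) hij
  rw [cs.lift_apply_simple, cs.lift_apply_simple] at h
  have hi := congrArg (fun r => r (Finsupp.single i 1) i) h
  simp [CoxeterMatrix.geometricReflection, Module.preReflection_apply,
    M.geometricCoroot_single_self, Finsupp.single_eq_of_ne hne] at hi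

section Parity

open scoped Classical

/-- Bourbaki's action (*Lie*, IV §1.4) of a simple reflection on pairs (reflection, sign),
extended to all of `W × ℤ/2`. -/
noncomputable def parityPerm (i : B) : Equiv.Perm (W × ZMod 2) :=
  Function.Involutive.toPerm
    (fun p => (cs.simple i * p.1 * cs.simple i, p.2 + if cs.simple i = p.1 then 1 else 0))
    (by
      rintro ⟨x, ε⟩
      refine Prod.ext ?_ ?_
      · simp [mul_assoc]
      · simp only [simple_eq_simple_mul_mul_simple_iff, simple_mul_simple_self, one_mul,
          CharTwo.add_cancel_right])

theorem parityPerm_apply (i : B) (x : W) (ε : ZMod 2) :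
    cs.parityPerm i (x, ε) =
      (cs.simple i * x * cs.simple i, ε + if cs.simple i = x then 1 else 0) := rfl

theorem parityPerm_mul_pow_apply (i j : B) (n : ℕ) (x : W) (ε : ZMod 2) :
    ((cs.parityPerm i * cs.parityPerm j) ^ n) (x, ε) =
      (((cs.simple j * cs.simple i) ^ n)⁻¹ * x * (cs.simple j * cs.simple i) ^ n,
        ε + ∑ k ∈ Finset.range (2 * n),
          if (cs.simple j * cs.simple i) ^ k * cs.simple j = x then 1 else 0) := by
  set r := cs.simple j * cs.simple i with hr
  have hsemi (n : ℕ) : cs.simple j * (r ^ n)⁻¹ = r ^ n * cs.simple j := by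
    have : SemiconjBy (cs.simple j) r⁻¹ r := by simp [SemiconjBy, r, mul_assoc]
    simpa [inv_pow] using (this.pow_right n).eq
  induction n with
  | zero => simp
  | succ n ih =>
    rw [pow_succ', Equiv.Perm.mul_apply, Equiv.Perm.mul_apply, ih, parityPerm_apply,
      parityPerm_apply]
    refine Prod.ext ?_ ?_
    · simp only [r, pow_succ, mul_inv_rev, inv_simple]
      group
    · have h2n : r ^ n * cs.simple j * (r ^ n)⁻¹ = r ^ (2 * n) * cs.simple j := by
        rw [mul_assoc, hsemi, ← mul_assoc, ← pow_add, two_mul]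
      have h2n1 : r ^ n * (cs.simple j * cs.simple i * cs.simple j) * (r ^ n)⁻¹ =
          r ^ (2 * n + 1) * cs.simple j := by
        rw [← hr, mul_assoc, mul_assoc, hsemi, ← mul_assoc r, ← pow_succ', ← mul_assoc, ← pow_add,
          show n + (n + 1) = 2 * n + 1 by ring]
      have hconj (y : W) : y = (r ^ n)⁻¹ * x * r ^ n ↔ r ^ n * y * (r ^ n)⁻¹ = x := by
        simpa using eq_mul_mul_inv_iff (a := (r ^ n)⁻¹) (x := x) (y := y)
      simp only [simple_eq_simple_mul_mul_simple_iff, hconj, h2n, h2n1, mul_add,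
        Finset.sum_range_succ]
      abel

theorem isLiftable_parityPerm : M.IsLiftable cs.parityPerm := by
  intro i j
  -- `(s j * s i) ^ k * s j` is `M i j`-periodic in `k`, so each term of the sum occurs twice.
  ext1 ⟨x, ε⟩
  rw [parityPerm_mul_pow_apply, cs.simple_mul_simple_pow', inv_one, one_mul, mul_one,
    two_mul, Finset.sum_range_add]
  simp [pow_add, cs.simple_mul_simple_pow', CharTwo.add_self_eq_zero]

noncomputable def parityRep : W →* Equiv.Perm (W × ZMod 2) :=
  cs.lift ⟨cs.parityPerm, cs.isLiftable_parityPerm⟩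

theorem parityRep_simple (i : B) : cs.parityRep (cs.simple i) = cs.parityPerm i :=
  cs.lift_apply_simple _ i

theorem parityRep_wordProd_apply (ω : List B) (x : W) (ε : ZMod 2) :
    cs.parityRep (cs.wordProd ω) (x, ε) =
      (cs.wordProd ω * x * (cs.wordProd ω)⁻¹, ε + (cs.rightInvSeq ω).count x) := by
  induction ω generalizing ε with
  | nil => simp
  | cons i ω ih =>
    rw [wordProd_cons, map_mul, Equiv.Perm.mul_apply, ih, parityRep_simple, parityPerm_apply]
    refine Prod.ext ?_ ?_
    · simp [mul_assoc]
    · simp only [rightInvSeq, List.count_cons, eq_mul_mul_inv_iff, beq_iff_eq]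
      push_cast
      ring

noncomputable def inversionParity (w t : W) : ZMod 2 := (cs.parityRep w (t, 0)).2

theorem inversionParity_wordProd (ω : List B) (t : W) :
    cs.inversionParity (cs.wordProd ω) t = (cs.rightInvSeq ω).count t := by
  simp [inversionParity, parityRep_wordProd_apply]

theorem parityRep_apply (w x : W) (ε : ZMod 2) :
    cs.parityRep w (x, ε) = (w * x * w⁻¹, ε + cs.inversionParity w x) := by
  obtain ⟨ω, rfl⟩ := cs.wordProd_surjective w
  rw [parityRep_wordProd_apply, inversionParity_wordProd]

theorem inversionParity_mul (u v x : W) :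
    cs.inversionParity (u * v) x =
      cs.inversionParity v x + cs.inversionParity u (v * x * v⁻¹) := by
  have h := congrArg Prod.snd (cs.parityRep_apply (u * v) x 0)
  rw [map_mul, Equiv.Perm.mul_apply, parityRep_apply, parityRep_apply] at h
  simpa using h.symm

theorem inversionParity_one (x : W) : cs.inversionParity 1 x = 0 := by
  simp [inversionParity]

theorem inversionParity_simple (i : B) (x : W) :
    cs.inversionParity (cs.simple i) x = if cs.simple i = x then 1 else 0 := by
  simp [inversionParity, parityRep_simple, parityPerm_apply]

theorem inversionParity_self {t : W} (ht : cs.IsReflection t) : cs.inversionParity t t = 1 := by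
  obtain ⟨u, i, rfl⟩ := ht
  have h₁ := cs.inversionParity_mul (u * cs.simple i) u⁻¹ (u * cs.simple i * u⁻¹)
  have h₂ := cs.inversionParity_mul u (cs.simple i) (cs.simple i)
  have h₃ := cs.inversionParity_mul u⁻¹ u (cs.simple i)
  rw [show u⁻¹ * (u * cs.simple i * u⁻¹) * u⁻¹⁻¹ = cs.simple i by group] at h₁
  rw [mul_inv_cancel_right, inversionParity_simple, if_pos rfl] at h₂
  rw [inv_mul_cancel, inversionParity_one] at h₃
  linear_combination h₁ + h₂ - h₃

theorem IsReduced.inversionParity_eq_one_iff {ω : List B} (hω : cs.IsReduced ω) {t : W} :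
    cs.inversionParity (cs.wordProd ω) t = 1 ↔ t ∈ cs.rightInvSeq ω := by
  rw [inversionParity_wordProd]
  by_cases ht : t ∈ cs.rightInvSeq ω
  · simp [List.count_eq_one_of_mem hω.nodup_rightInvSeq ht, ht]
  · simp [List.count_eq_zero_of_not_mem ht, ht]

theorem inversionParity_eq_one_iff {w t : W} (ht : cs.IsReflection t) :
    cs.inversionParity w t = 1 ↔ cs.IsRightInversion w t := by
  have mp (w : W) (h : cs.inversionParity w t = 1) : cs.IsRightInversion w t := by
    obtain ⟨ω, hω, rfl⟩ := cs.exists_isReduced w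
    exact cs.isRightInversion_of_mem_rightInvSeq hω (hω.inversionParity_eq_one_iff.1 h)
  refine ⟨mp w, fun h => ?_⟩
  have hwt : cs.inversionParity (w * t) t = 0 := by
    by_contra hne
    have := (mp _ ((by decide : ∀ a : ZMod 2, a ≠ 0 → a = 1) _ hne)).2
    rw [mul_assoc, ht.mul_self, mul_one] at this
    exact lt_asymm this h.2
  have := cs.inversionParity_mul (w * t) t t
  rw [mul_inv_cancel_right, mul_assoc, ht.mul_self, mul_one, cs.inversionParity_self ht, hwt,
    add_zero] at this
  exact this

theorem IsReduced.isRightInversion_iff_mem_rightInvSeq {ω : List B} (hω : cs.IsReduced ω)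
    {t : W} : cs.IsRightInversion (cs.wordProd ω) t ↔ t ∈ cs.rightInvSeq ω :=
  ⟨fun h => hω.inversionParity_eq_one_iff.1 ((cs.inversionParity_eq_one_iff h.1).2 h),
    cs.isRightInversion_of_mem_rightInvSeq hω⟩

theorem encard_setOf_isRightInversion (w : W) :
    {t | cs.IsRightInversion w t}.encard = cs.length w := by
  obtain ⟨ω, hω, rfl⟩ := cs.exists_isReduced w
  have : {t | cs.IsRightInversion (cs.wordProd ω) t} = ((cs.rightInvSeq ω).toFinset : Set W) := by
    ext t
    simp [hω.isRightInversion_iff_mem_rightInvSeq]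
  rw [this, Set.encard_coe_eq_coe_finsetCard, List.toFinset_card_of_nodup hω.nodup_rightInvSeq,
    length_rightInvSeq, hω.eq]

theorem simple_mul_eq_mul_simple_of_isRightDescent {w : W} {i j : B}
    (hw : ¬cs.IsRightDescent w j) (h : cs.IsRightDescent (cs.simple i * w) j) :
    cs.simple i * w = w * cs.simple j := by
  simp only [← isRightInversion_simple_iff_isRightDescent,
    ← cs.inversionParity_eq_one_iff (cs.isReflection_simple j)] at hw h
  rw [inversionParity_mul, (by decide : ∀ a : ZMod 2, a ≠ 1 → a = 0) _ hw, zero_add,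
    inversionParity_simple, ite_eq_left_iff] at h
  by_contra hne
  refine absurd (h fun heq => hne ?_) (by decide)
  rw [heq]
  group

end Parity

theorem length_mul_eq_add_of_forall_isRightInversion {u v : W}
    (h : ∀ t, cs.IsReflection t → cs.IsRightInversion (u * v) t) :
    cs.length (u * v) = cs.length u + cs.length v := by
  -- The cocycle identity makes `Inv (u * v)` the symmetric difference of `Inv v` and
  -- `v⁻¹ (Inv u) v`; as `Inv (u * v)` contains every reflection, the union is disjoint.
  have hsplit (t : W) (ht : cs.IsReflection t) :
      cs.IsRightInversion v t ↔ ¬cs.IsRightInversion u (MulAut.conj v t) := by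
    have := cs.inversionParity_mul u v t
    rw [(cs.inversionParity_eq_one_iff ht).2 (h t ht)] at this
    rw [← cs.inversionParity_eq_one_iff ht, MulAut.conj_apply,
      ← cs.inversionParity_eq_one_iff (ht.conj v)]
    revert this
    generalize cs.inversionParity v t = a
    generalize cs.inversionParity u (v * t * v⁻¹) = b
    revert a b
    decide
  have hunion : {t | cs.IsRightInversion (u * v) t} =
      {t | cs.IsRightInversion v t} ∪ MulAut.conj v ⁻¹' {t | cs.IsRightInversion u t} := by
    ext t
    simp only [Set.mem_ofPred_eq, Set.mem_union, Set.mem_preimage]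
    constructor
    · intro ht
      rw [hsplit t ht.1]
      exact not_or_of_imp id
    · rintro (ht | ht)
      · exact h t ht.1
      · exact h t ((cs.isReflection_conj_iff v t).1 ht.1)
  have hdisj : Disjoint {t | cs.IsRightInversion v t}
      (MulAut.conj v ⁻¹' {t | cs.IsRightInversion u t}) :=
    Set.disjoint_left.2 fun t ht => (hsplit t ht.1).1 ht
  have := Set.encard_union_eq hdisj
  rw [← hunion, Set.encard_preimage_of_injective_subset_range (MulAut.conj v).injective
    (by simp [(MulAut.conj v).surjective.range_eq])] at this
  simp only [encard_setOf_isRightInversion] at this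
  rw [add_comm] at this
  exact_mod_cast this

end CoxeterSystem

section LazyWalk

variable {B W : Type*} [Group W] {M : CoxeterMatrix B} (cs : CoxeterSystem M W)

theorem lazyWalkCount_zero_of_ne_one {w : W} (hw : w ≠ 1) : lazyWalkCount cs 0 w = 0 := by
  simp [lazyWalkCount, hw.symm]

theorem lazyWalkCount_succ [Fintype B] (n : ℕ) (w : W) :
    lazyWalkCount cs (n + 1) w =
      lazyWalkCount cs n w + ∑ i, lazyWalkCount cs n (cs.simple i * w) := by
  refine (card_ofFn_prod_succ_eq_sum (fun o : Option B => o.elim 1 cs.simple) n w).trans ?_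
  rw [Fintype.sum_option]
  simp only [Option.elim_none, Option.elim_some, inv_one, one_mul, cs.inv_simple]
  rfl

theorem lazyWalkCount_mul_simple_le [Fintype B] (n : ℕ) {w : W} {j : B}
    (hj : ¬cs.IsRightDescent w j) :
    lazyWalkCount cs n (w * cs.simple j) ≤ lazyWalkCount cs n w := by
  induction n generalizing w with
  | zero =>
    have hne : w * cs.simple j ≠ 1 := fun h => hj <| by
      rw [CoxeterSystem.IsRightDescent, h, mul_eq_one_iff_eq_inv.1 h, cs.inv_simple,
        cs.length_simple, cs.length_one]
      exact Nat.one_pos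
    rw [lazyWalkCount_zero_of_ne_one cs hne]
    exact Nat.zero_le _
  | succ n ih =>
    classical
    rw [lazyWalkCount_succ, lazyWalkCount_succ]
    have hstep (i : B) (hi : cs.simple i * w ≠ w * cs.simple j) :
        lazyWalkCount cs n (cs.simple i * (w * cs.simple j)) ≤
          lazyWalkCount cs n (cs.simple i * w) := by
      rw [← mul_assoc]
      exact ih (mt (cs.simple_mul_eq_mul_simple_of_isRightDescent hj) hi)
    -- Only `i₀` with `s i₀ * w = w * s j` escapes the induction hypothesis; its two terms
    -- `N n w` and `N n (w * s j)` trade places with the lazy terms.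
    by_cases h : ∃ i₀, cs.simple i₀ * w = w * cs.simple j
    · obtain ⟨i₀, hi₀⟩ := h
      have hback : cs.simple i₀ * (w * cs.simple j) = w := by
        rw [← mul_assoc, hi₀, cs.simple_mul_simple_cancel_right]
      have hrest : ∑ i ∈ Finset.univ.erase i₀, lazyWalkCount cs n (cs.simple i * (w * cs.simple j))
          ≤ ∑ i ∈ Finset.univ.erase i₀, lazyWalkCount cs n (cs.simple i * w) :=
        Finset.sum_le_sum fun i hi => hstep i fun h =>
          Finset.ne_of_mem_erase hi (cs.simple_injective (mul_right_cancel (h.trans hi₀.symm)))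
      rw [← Finset.add_sum_erase _ _ (Finset.mem_univ i₀),
        ← Finset.add_sum_erase _ _ (Finset.mem_univ i₀), hback, hi₀]
      omega
    · push Not at h
      exact add_le_add (ih hj) (Finset.sum_le_sum fun i _ => hstep i (h i))

theorem lazyWalkCount_mul_wordProd_le [Fintype B] (n : ℕ) (ω : List B) {w : W}
    (h : cs.length (w * cs.wordProd ω) = cs.length w + ω.length) :
    lazyWalkCount cs n (w * cs.wordProd ω) ≤ lazyWalkCount cs n w := by
  induction ω generalizing w with
  | nil => simp
  | cons j ω ih =>
    rw [cs.wordProd_cons, ← mul_assoc] at h ⊢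
    have h₁ := cs.length_mul_le (w * cs.simple j) (cs.wordProd ω)
    have h₂ := cs.length_wordProd_le ω
    have h₃ := cs.length_mul_le w (cs.simple j)
    rw [cs.length_simple] at h₃
    rw [List.length_cons] at h
    have hj : ¬cs.IsRightDescent w j := by
      rw [CoxeterSystem.IsRightDescent]
      omega
    exact (ih (by omega)).trans (lazyWalkCount_mul_simple_le cs n hj)

theorem lazyWalkCount_mul_le [Fintype B] (n : ℕ) {w v : W}
    (h : cs.length (w * v) = cs.length w + cs.length v) :
    lazyWalkCount cs n (w * v) ≤ lazyWalkCount cs n w := by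
  obtain ⟨ω, hω, rfl⟩ := cs.exists_isReduced v
  exact lazyWalkCount_mul_wordProd_le cs n ω (hω.eq ▸ h)

end LazyWalk

theorem lazyWalkCount_longest_le_general {B W : Type*} [Fintype B] [Group W]
    {M : CoxeterMatrix B} (cs : CoxeterSystem M W) (w₀ : W)
    (hw₀ : ∀ w : W, cs.length w ≤ cs.length w₀) (n : ℕ) (w : W) :
    lazyWalkCount cs n w₀ ≤ lazyWalkCount cs n w := by
  have hinv (t : W) (ht : cs.IsReflection t) : cs.IsRightInversion (w * (w⁻¹ * w₀)) t := by
    rw [mul_inv_cancel_left]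
    exact ⟨ht, (hw₀ _).lt_of_ne (ht.length_mul_left_ne w₀)⟩
  have hlen := cs.length_mul_eq_add_of_forall_isRightInversion hinv
  simpa using lazyWalkCount_mul_le cs n hlen

/-- For the lazy simple random walk on a finite Coxeter group, the longest element is
the least likely element after any number of steps. -/
theorem lazyWalkCount_longest_le {B W : Type*} [Fintype B] [Group W] [Finite W]
    {M : CoxeterMatrix B} (cs : CoxeterSystem M W) (w₀ : W)
    (hw₀ : ∀ w : W, cs.length w ≤ cs.length w₀) (n : ℕ) (w : W) :
    lazyWalkCount cs n w₀ ≤ lazyWalkCount cs n w :=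
  lazyWalkCount_longest_le_general cs w₀ hw₀ n w
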